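/- arXiv:1206.1146 — 3 statements merged into one kernel-verified Lean document; each statement's English description precedes it below -/
import Mathlib

section
/- Let p be an odd prime, k ≥ 1 an integer with d := gcd(k, p-1), u ∈ F_p, and L an integer with 1 ≤ L < √p/2. Then there exist sets A, B ⊆ F_p with |A| ≥ L and |B| = L, and an element a ∈ F_p^×, such that every value of F(x,y) = x^k(x^k + y + u) with x ∈ A, y ∈ B can be written as a⁻²·x'·y' with x', y' ∈ {1, ..., 2L} ⊆ F_p. -/
/-!
Averaging over `a ∈ 𝔽_pˣ`, the number of units `x` with `a x^k ∈ [1, L]` is `L` on average, so for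
some `a` it is at least `L`; take `A` to be these `x` and `B := a⁻¹ [1, L] - u`. For `x ∈ A`, `y ∈ B`
both `a x^k` and `a (y + u)` lie in `[1, L]`, hence `a² x^k (x^k + y + u) = (a x^k) (a x^k + a (y + u))`
is a product of two elements of `[1, 2L]`.
-/

open Finset

section Averaging

variable {G : Type*} [Group G] [Fintype G] [DecidableEq G]

lemma card_filter_mul_mem (C : Finset G) (y : G) : #{a | a * y ∈ C} = #C :=
  card_nbij' (· * y) (· * y⁻¹) (by simp [Set.MapsTo]) (by simp [Set.MapsTo])
    (fun _ _ => mul_inv_cancel_right _ _) (fun _ _ => inv_mul_cancel_right _ _)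

lemma sum_card_filter_mul_mem (f : G → G) (C : Finset G) :
    ∑ a, #{x | a * f x ∈ C} = Fintype.card G * #C := by
  simp only [card_filter]
  rw [sum_comm]
  simp only [← card_filter, card_filter_mul_mem, sum_const, card_univ, smul_eq_mul]

lemma exists_card_le_card_filter_mul_mem (f : G → G) (C : Finset G) :
    ∃ a, #C ≤ #{x | a * f x ∈ C} := by
  have hsum : ∑ _a : G, #C ≤ ∑ a, #{x | a * f x ∈ C} := by
    rw [sum_card_filter_mul_mem, sum_const, card_univ, smul_eq_mul]
  obtain ⟨a, -, ha⟩ := exists_le_of_sum_le univ_nonempty hsum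
  exact ⟨a, ha⟩

end Averaging

namespace ZMod

variable {p : ℕ}

lemma card_image_natCast_Icc {L : ℕ} (hL : L < p) :
    #((Icc 1 L).image (Nat.cast : ℕ → ZMod p)) = L := by
  rw [card_image_of_injOn, Nat.card_Icc, Nat.add_sub_cancel]
  intro m hm n hn h
  simp only [coe_Icc, Set.mem_Icc] at hm hn
  simpa [val_natCast_of_lt (hm.2.trans_lt hL), val_natCast_of_lt (hn.2.trans_lt hL)]
    using congrArg val h

lemma natCast_ne_zero_of_pos_of_lt {n : ℕ} (h0 : 0 < n) (hn : n < p) : (n : ZMod p) ≠ 0 := by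
  rw [Ne, natCast_eq_zero_iff]
  exact fun hdvd => (Nat.le_of_dvd h0 hdvd).not_gt hn

lemma card_units_preimage_image_natCast_Icc [Fact p.Prime] {L : ℕ} (hL : L < p) :
    #(((Icc 1 L).image (Nat.cast : ℕ → ZMod p)).preimage Units.val
      Units.val_injective.injOn) = L := by
  rw [card_preimage, filter_true_of_mem, card_image_natCast_Icc hL]
  simp only [mem_image, mem_Icc]
  rintro _ ⟨n, hn, rfl⟩
  exact (natCast_ne_zero_of_pos_of_lt hn.1 (hn.2.trans_lt hL)).isUnit

end ZMod

lemma mul_add_add_eq_inv_sq_mul {K : Type*} [Field K] {a s t u m n : K} (ha : a ≠ 0)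
    (hs : a * s = m) (ht : a * (t + u) = n) : s * (s + t + u) = a⁻¹ ^ 2 * m * (m + n) := by
  subst hs ht
  field_simp
  ring

lemma lt_of_natCast_lt_sqrt_div_two {n L : ℕ} (h : (L : ℝ) < √n / 2) : L < n := by
  have hsq : (2 * L) ^ 2 < n := by
    exact_mod_cast (Real.lt_sqrt (by positivity)).1 (by linarith : (2 * L : ℝ) < √n)
  nlinarith

theorem stmt_11_general (p : ℕ) [Fact p.Prime] (k : ℕ) (u : ZMod p)
    (L : ℕ) (hLp : (L : ℝ) < Real.sqrt p / 2) :
    ∃ (A B : Finset (ZMod p)) (a : (ZMod p)ˣ),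
      L ≤ A.card ∧ B.card = L ∧
      ∀ x ∈ A, ∀ y ∈ B, ∃ x' ∈ Finset.Icc 1 (2 * L), ∃ y' ∈ Finset.Icc 1 (2 * L),
        x ^ k * (x ^ k + y + u)
          = ((a⁻¹ : (ZMod p)ˣ) : ZMod p) ^ 2 * (x' : ZMod p) * (y' : ZMod p) := by
  have hLp' : L < p := lt_of_natCast_lt_sqrt_div_two hLp
  set I : Finset (ZMod p) := (Icc 1 L).image Nat.cast
  set C : Finset (ZMod p)ˣ := I.preimage Units.val Units.val_injective.injOn
  obtain ⟨a, ha⟩ := exists_card_le_card_filter_mul_mem (· ^ k) C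
  refine ⟨Finset.image Units.val {x | a * x ^ k ∈ C},
    I.image fun c => ((a⁻¹ : (ZMod p)ˣ) : ZMod p) * c - u, a, ?_, ?_, ?_⟩
  · rwa [card_image_of_injective _ Units.val_injective,
      ← ZMod.card_units_preimage_image_natCast_Icc hLp']
  · have hinj : Function.Injective fun c : ZMod p => ((a⁻¹ : (ZMod p)ˣ) : ZMod p) * c - u :=
      sub_left_injective.comp (mul_right_injective₀ (Units.ne_zero _))
    rw [card_image_of_injective _ hinj, ZMod.card_image_natCast_Icc hLp']
  · intro _ hxA _ hyB
    obtain ⟨x, hx, rfl⟩ := mem_image.1 hxA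
    obtain ⟨_, hc, rfl⟩ := mem_image.1 hyB
    obtain ⟨n, hn, rfl⟩ := mem_image.1 hc
    obtain ⟨m, hm, hxm⟩ : ∃ m ∈ Icc 1 L, (m : ZMod p) = a * x ^ k := by
      simpa [C, I] using (mem_filter.1 hx).2
    simp only [mem_Icc] at hm hn
    refine ⟨m, by simp only [mem_Icc]; omega, m + n, by simp only [mem_Icc]; omega, ?_⟩
    push_cast
    exact mul_add_add_eq_inv_sq_mul a.ne_zero hxm.symm
      (by rw [sub_add_cancel, mul_inv_cancel_left₀ a.ne_zero])

theorem stmt_11 (p : ℕ) [Fact p.Prime] (hp : Odd p) (k : ℕ) (hk : 1 ≤ k)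
    (d : ℕ) (hd : d = Nat.gcd k (p - 1)) (u : ZMod p)
    (L : ℕ) (hL : 1 ≤ L) (hLp : (L : ℝ) < Real.sqrt p / 2) :
    ∃ (A B : Finset (ZMod p)) (a : (ZMod p)ˣ),
      L ≤ A.card ∧ B.card = L ∧
      ∀ x ∈ A, ∀ y ∈ B, ∃ x' ∈ Finset.Icc 1 (2 * L), ∃ y' ∈ Finset.Icc 1 (2 * L),
        x ^ k * (x ^ k + y + u)
          = ((a⁻¹ : (ZMod p)ˣ) : ZMod p) ^ 2 * (x' : ZMod p) * (y' : ZMod p) :=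
  stmt_11_general p k u L hLp
end

section
/- Let p be an odd prime, u ∈ F_p, L a positive integer with L < p/2, and f ∈ F_p[x] a polynomial of degree k ≥ 1. Assume the Weil bound |Σ_{x ∈ F_p} e(h·f(x)/p)| ≤ (k-1)√p for all h ∈ F_p, h ≠ 0. Then the number N of residues x ∈ F_p such that f(x) lies in the interval (u - L, u + L) ⊆ F_p satisfies N ≥ L - k√p. -/
open Finset
open scoped ComplexConjugate Pointwise

/-!
Let `A = {0, …, L - 1} ⊆ 𝔽_p` and `T = ∑ₓ d(f x - u)`, where `d z` counts the representations
`z = a - b` with `a, b ∈ A`. Orthogonality of additive characters gives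
`p T = ∑ₕ S(h) ψ(-h u) |Â(h)|²`, with `S` the Weil sum and `Â(h) = ∑_{a ∈ A} ψ(h a)`.
The term `h = 0` is `p L²`; by the Weil bound and Parseval `∑ₕ |Â(h)|² = p L` the others
contribute at most `(k - 1) √p · p L`. On the other hand `d ≤ L`, and `d(f x - u) = 0` unless
`f x ∈ u + (A - A) ⊆ (u - L, u + L)`, so `T ≤ L N`.
-/

def diffCount {G : Type*} [AddGroup G] [DecidableEq G] (A : Finset G) (z : G) : ℕ :=
  #{ab ∈ A ×ˢ A | ab.1 - ab.2 = z}

section Counting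

variable {G : Type*} [AddGroup G] [DecidableEq G]

lemma diffCount_le_card (A : Finset G) (z : G) : diffCount A z ≤ #A := by
  refine card_le_card_of_injOn Prod.fst (fun ab hab => (mem_product.1 (mem_filter.1 hab).1).1) ?_
  rintro ⟨a, b⟩ hab ⟨a', b'⟩ hab' (rfl : a = a')
  simp only [coe_filter, Set.mem_ofPred_eq] at hab hab'
  simpa using hab.2.trans hab'.2.symm

lemma diffCount_zero (A : Finset G) : diffCount A 0 = #A := by
  simp_rw [diffCount, sub_eq_zero]
  rw [← diag_eq_filter, diag_card]

lemma diffCount_eq_sum (A : Finset G) (z : G) :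
    diffCount A z = ∑ a ∈ A, ∑ b ∈ A, if a - b = z then 1 else 0 := by
  rw [diffCount, card_filter, sum_product]

lemma diffCount_eq_zero_of_notMem {A : Finset G} {z : G} (hz : z ∉ A - A) : diffCount A z = 0 := by
  refine card_eq_zero.2 (filter_eq_empty_iff.2 fun ab hab hz' => hz ?_)
  obtain ⟨ha, hb⟩ := mem_product.1 hab
  exact mem_sub.2 ⟨_, ha, _, hb, hz'⟩

lemma sum_diffCount_le {X : Type*} [Fintype X] (g : X → G) (A : Finset G) :
    ∑ x, diffCount A (g x) ≤ #A * #{x | g x ∈ A - A} := by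
  rw [← sum_filter_of_ne fun x _ hx => by_contra fun h => hx (diffCount_eq_zero_of_notMem h)]
  calc ∑ x with g x ∈ A - A, diffCount A (g x) ≤ ∑ x with g x ∈ A - A, #A :=
        sum_le_sum fun x _ => diffCount_le_card A (g x)
    _ = #A * #{x | g x ∈ A - A} := by rw [sum_const, smul_eq_mul, mul_comm]

end Counting

section Fourier

variable {R : Type*} [CommRing R] [Fintype R] [DecidableEq R] {ψ : AddChar R ℂ}

theorem card_mul_sum_diffCount_eq (hψ : ψ.IsPrimitive) {X : Type*} [Fintype X] (g : X → R)
    (u : R) (A : Finset R) :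
    (Fintype.card R : ℂ) * ∑ x, (diffCount A (g x - u) : ℂ) =
      ∑ h, (∑ x, ψ (h * g x)) * ψ (-(h * u)) * (‖∑ a ∈ A, ψ (h * a)‖ : ℂ) ^ 2 := by
  have orthogonality (z w : R) :
      (Fintype.card R : ℂ) * (if w = z then 1 else 0) = ∑ h, ψ (h * (z - w)) := by
    rw [AddChar.sum_mulShift _ hψ]
    simp [sub_eq_zero, eq_comm]
  have expand (h : R) (x : X) (a b : R) : ψ (h * (g x - u - (a - b))) =
      ψ (h * g x) * ψ (-(h * u)) * (conj (ψ (h * a)) * ψ (h * b)) := by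
    rw [← AddChar.map_neg_eq_conj, ← AddChar.map_add_eq_mul, ← AddChar.map_add_eq_mul,
      ← AddChar.map_add_eq_mul]
    ring_nf
  simp_rw [← Complex.conj_mul', map_sum, sum_mul_sum, mul_sum, diffCount_eq_sum, Nat.cast_sum,
    Nat.cast_ite, Nat.cast_one, Nat.cast_zero, mul_sum, orthogonality, expand]
  simp_rw [sum_mul, sum_comm (s := (univ : Finset X))]
  exact sum_comm_cycle

theorem sum_norm_sq_sum_mulShift (hψ : ψ.IsPrimitive) (A : Finset R) :
    ∑ h, ‖∑ a ∈ A, ψ (h * a)‖ ^ 2 = Fintype.card R * #A := by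
  -- Parseval is the one-point case `X = Unit`, `g = u = 0` of the identity above.
  have := card_mul_sum_diffCount_eq hψ (fun _ : Unit => 0) 0 A
  simp only [sub_zero, diffCount_zero, univ_unique, sum_singleton, mul_zero, neg_zero,
    AddChar.map_zero_eq_one, one_mul] at this
  exact_mod_cast this.symm

theorem card_mul_sum_diffCount_ge (hψ : ψ.IsPrimitive) {X : Type*} [Fintype X] (g : X → R)
    (u : R) (A : Finset R) {B : ℝ} (hB : 0 ≤ B)
    (hg : ∀ h ≠ 0, ‖∑ x, ψ (h * g x)‖ ≤ B) :
    Fintype.card X * #A ^ 2 - B * (Fintype.card R * #A) ≤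
      Fintype.card R * ∑ x, (diffCount A (g x - u) : ℝ) := by
  set F : R → ℂ := fun h => (∑ x, ψ (h * g x)) * ψ (-(h * u)) * (‖∑ a ∈ A, ψ (h * a)‖ : ℂ) ^ 2
  have hF0 : F 0 = Fintype.card X * #A ^ 2 := by simp [F]
  have hsplit : (Fintype.card R : ℂ) * ∑ x, (diffCount A (g x - u) : ℂ) =
      Fintype.card X * #A ^ 2 + ∑ h ∈ univ.erase 0, F h := by
    rw [card_mul_sum_diffCount_eq hψ, ← hF0, add_sum_erase _ F (mem_univ 0)]
  have herror : ‖∑ h ∈ univ.erase 0, F h‖ ≤ B * (Fintype.card R * #A) :=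
    calc ‖∑ h ∈ univ.erase 0, F h‖ ≤ ∑ h ∈ univ.erase 0, ‖F h‖ := norm_sum_le _ _
      _ ≤ ∑ h ∈ univ.erase 0, B * ‖∑ a ∈ A, ψ (h * a)‖ ^ 2 := by
        refine sum_le_sum fun h hh => ?_
        simp only [F, norm_mul, norm_pow, AddChar.norm_apply, Complex.norm_real, norm_norm, mul_one]
        gcongr
        exact hg h (ne_of_mem_erase hh)
      _ ≤ ∑ h, B * ‖∑ a ∈ A, ψ (h * a)‖ ^ 2 :=
        sum_le_sum_of_subset_of_nonneg (erase_subset _ _) fun _ _ _ => by positivity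
      _ = B * (Fintype.card R * #A) := by rw [← mul_sum, sum_norm_sq_sum_mulShift hψ]
  have hre := congrArg Complex.re hsplit
  simp only [← Complex.ofReal_natCast, ← Complex.ofReal_sum, ← Complex.ofReal_mul,
    ← Complex.ofReal_pow, Complex.add_re, Complex.ofReal_re] at hre
  linarith [(abs_le.1 ((Complex.abs_re_le_norm _).trans herror)).1]

end Fourier

namespace ZMod

variable {p : ℕ}

lemma card_image_natCast_range {L : ℕ} (hL : L ≤ p) :
    #((range L).image (Nat.cast : ℕ → ZMod p)) = L := by
  rw [card_image_of_injOn, card_range]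
  intro i hi j hj hij
  have hip : i < p := (mem_range.1 hi).trans_le hL
  have hjp : j < p := (mem_range.1 hj).trans_le hL
  simpa [ZMod.val_cast_of_lt hip, ZMod.val_cast_of_lt hjp] using congrArg ZMod.val hij

lemma exists_intCast_of_mem_sub_image_natCast_range {L : ℕ} {z : ZMod p}
    (hz : z ∈ (range L).image (Nat.cast : ℕ → ZMod p) - (range L).image Nat.cast) :
    ∃ j : ℤ, |j| < L ∧ z = j := by
  obtain ⟨_, ha, _, hb, rfl⟩ := mem_sub.1 hz
  obtain ⟨i, hi, rfl⟩ := mem_image.1 ha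
  obtain ⟨i', hi', rfl⟩ := mem_image.1 hb
  rw [mem_range] at hi hi'
  exact ⟨i - i', by rw [abs_sub_lt_iff]; omega, by push_cast; rfl⟩

end ZMod

open Classical in
theorem stmt_14_general (p : ℕ) [Fact p.Prime] (u : ZMod p)
    (L : ℕ) (hL : 0 < L) (hLp : 2 * L < p)
    (f : Polynomial (ZMod p)) (k : ℕ)
    (e : ZMod p → ℂ)
    (he : e = fun t => Complex.exp (2 * Real.pi * Complex.I * (t.val : ℂ) / p))
    (hWeil : ∀ h : ZMod p, h ≠ 0 →
      ‖∑ x : ZMod p, e (h * f.eval x)‖ ≤ ((k : ℝ) - 1) * Real.sqrt p)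
    (N : ℕ)
    (hN : N = (Finset.univ.filter (fun x : ZMod p =>
      ∃ j : ℤ, |j| < (L : ℤ) ∧ f.eval x = u + (j : ZMod p))).card) :
    (L : ℝ) - k * Real.sqrt p ≤ N := by
  set A := (range L).image (Nat.cast : ℕ → ZMod p)
  have hA : #A = L := ZMod.card_image_natCast_range (by omega)
  have he_std : e = ZMod.stdAddChar := by
    funext t
    rw [he, ZMod.stdAddChar_apply, ZMod.toCircle_apply]
  have hB : 0 ≤ ((k : ℝ) - 1) * Real.sqrt p := (norm_nonneg _).trans (hWeil 1 one_ne_zero)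
  have hlower := card_mul_sum_diffCount_ge (ZMod.isPrimitive_stdAddChar p) (f.eval ·) u A hB
    (by simpa only [he_std] using hWeil)
  have hupper : ∑ x, diffCount A (f.eval x - u) ≤ L * N := by
    refine (sum_diffCount_le (f.eval · - u) A).trans ?_
    rw [hA, hN]
    refine Nat.mul_le_mul_left L (card_le_card fun x hx => ?_)
    obtain ⟨j, hj, hx⟩ := ZMod.exists_intCast_of_mem_sub_image_natCast_range (mem_filter.1 hx).2
    exact mem_filter.2 ⟨mem_univ x, j, hj, by rw [← hx]; ring⟩
  rw [ZMod.card, hA] at hlower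
  have hupper' : (p : ℝ) * ∑ x, (diffCount A (f.eval x - u) : ℝ) ≤ p * (L * N) := by
    gcongr; exact_mod_cast hupper
  have hp0 : (0 : ℝ) < p := by exact_mod_cast (Fact.out : p.Prime).pos
  have hL0 : (0 : ℝ) < L := by exact_mod_cast hL
  have hN_ge : (L : ℝ) - ((k : ℝ) - 1) * Real.sqrt p ≤ N := by
    refine le_of_mul_le_mul_left ?_ hL0
    refine le_of_mul_le_mul_left ?_ hp0
    linarith
  linarith [hN_ge, Real.sqrt_nonneg p]

open Classical in
theorem stmt_14 (p : ℕ) [Fact p.Prime] (hp : Odd p) (u : ZMod p)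
    (L : ℕ) (hL : 0 < L) (hLp : 2 * L < p)
    (f : Polynomial (ZMod p)) (k : ℕ) (hk : f.natDegree = k) (hk1 : 1 ≤ k)
    (e : ZMod p → ℂ)
    (he : e = fun t => Complex.exp (2 * Real.pi * Complex.I * (t.val : ℂ) / p))
    (hWeil : ∀ h : ZMod p, h ≠ 0 →
      ‖∑ x : ZMod p, e (h * f.eval x)‖ ≤ ((k : ℝ) - 1) * Real.sqrt p)
    (N : ℕ)
    (hN : N = (Finset.univ.filter (fun x : ZMod p =>
      ∃ j : ℤ, |j| < (L : ℤ) ∧ f.eval x = u + (j : ZMod p))).card) :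
    (L : ℝ) - k * Real.sqrt p ≤ N :=
  stmt_14_general p u L hL hLp f k e he hWeil N hN
end

section
/- Let p be a prime and A, B, C, D ⊆ F_p nonempty sets with |A|·|B|·|C|·|D| > p³. Then there exist a ∈ A, b ∈ B, c ∈ C, d ∈ D with a + b = c·d. -/
/-!
Write `Ŝ(r) = ∑_{s ∈ S} ψ(r s)` for a primitive additive character `ψ` of `F = 𝔽_q`. Orthogonality
of characters gives `q N = ∑_r Â(r) B̂(r) T(-r)`, where `N` counts the solutions of `a + b = c d` and
`T(u) = ∑_{c ∈ C, d ∈ D} ψ(u c d)`. The term `r = 0` is `|A||B||C||D|`. For `r ≠ 0`, Cauchy–Schwarz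
over `c` and Parseval over `d` give `|T(-r)| ≤ √(q |C||D|)`, and Cauchy–Schwarz with Parseval gives
`∑_r |Â(r)||B̂(r)| ≤ q √(|A||B|)`. So `|q N - |A||B||C||D|| ≤ q √(q |A||B||C||D|)`, and `N = 0`
forces `|A||B||C||D| ≤ q³`.
-/

open Finset ComplexConjugate

namespace Sarkozy

variable {F : Type*} [Field F]

def expSum (ψ : AddChar F ℂ) (S : Finset F) (x : F) : ℂ := ∑ a ∈ S, ψ (x * a)

@[simp]
theorem expSum_zero (ψ : AddChar F ℂ) (S : Finset F) : expSum ψ S 0 = #S := by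
  simp [expSum]

variable [DecidableEq F]

def solutions (A B C D : Finset F) : Finset (F × F × F × F) :=
  (A ×ˢ B ×ˢ C ×ˢ D).filter fun x ↦ x.1 + x.2.1 = x.2.2.1 * x.2.2.2

variable [Fintype F] {ψ : AddChar F ℂ}

theorem sum_norm_expSum_sq (hψ : ψ.IsPrimitive) (S : Finset F) :
    ∑ x, ‖expSum ψ S x‖ ^ 2 = (Fintype.card F : ℝ) * #S := by
  have key : ∑ x, expSum ψ S x * conj (expSum ψ S x) = (Fintype.card F : ℂ) * #S := by
    simp only [expSum, map_sum, sum_mul_sum, ← AddChar.map_neg_eq_conj, ← AddChar.map_add_eq_mul]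
    rw [sum_comm]
    simp_rw [sum_comm (s := univ), ← mul_neg, ← mul_add, AddChar.sum_mulShift _ hψ]
    simp [add_neg_eq_zero, mul_comm]
  apply Complex.ofReal_injective
  push_cast
  simpa only [Complex.mul_conj'] using key

theorem norm_sum_expSum_mul_le (hψ : ψ.IsPrimitive) {u : F} (hu : u ≠ 0) (C D : Finset F) :
    ‖∑ c ∈ C, expSum ψ D (u * c)‖ ≤ √(Fintype.card F * #C * #D) := by
  have hsq : ∑ c ∈ C, ‖expSum ψ D (u * c)‖ ^ 2 ≤ Fintype.card F * #D := by
    calc ∑ c ∈ C, ‖expSum ψ D (u * c)‖ ^ 2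
        = ∑ y ∈ C.image (u * ·), ‖expSum ψ D y‖ ^ 2 :=
          (sum_image (f := fun y ↦ ‖expSum ψ D y‖ ^ 2) (mul_right_injective₀ hu).injOn).symm
      _ ≤ ∑ y, ‖expSum ψ D y‖ ^ 2 := sum_le_univ_sum_of_nonneg fun _ ↦ by positivity
      _ = Fintype.card F * #D := sum_norm_expSum_sq hψ D
  calc ‖∑ c ∈ C, expSum ψ D (u * c)‖
      ≤ ∑ c ∈ C, 1 * ‖expSum ψ D (u * c)‖ := by simpa only [one_mul] using norm_sum_le _ _
    _ ≤ √(∑ c ∈ C, 1 ^ 2) * √(∑ c ∈ C, ‖expSum ψ D (u * c)‖ ^ 2) :=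
      Real.sum_mul_le_sqrt_mul_sqrt _ _ _
    _ ≤ √(#C : ℝ) * √(Fintype.card F * #D) := by
      gcongr
      simp
    _ = √(Fintype.card F * #C * #D) := by
      rw [← Real.sqrt_mul (by positivity)]
      congr 1
      ring

theorem sum_norm_expSum_mul_norm_expSum_le (hψ : ψ.IsPrimitive) (A B : Finset F) :
    ∑ x, ‖expSum ψ A x‖ * ‖expSum ψ B x‖ ≤ Fintype.card F * √(#A * #B) :=
  calc ∑ x, ‖expSum ψ A x‖ * ‖expSum ψ B x‖
      ≤ √(∑ x, ‖expSum ψ A x‖ ^ 2) * √(∑ x, ‖expSum ψ B x‖ ^ 2) :=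
        Real.sum_mul_le_sqrt_mul_sqrt _ _ _
    _ = Fintype.card F * √(#A * #B) := by
      rw [sum_norm_expSum_sq hψ, sum_norm_expSum_sq hψ, ← Real.sqrt_mul (by positivity),
        show (Fintype.card F : ℝ) * #A * (Fintype.card F * #B)
          = (Fintype.card F) ^ 2 * (#A * #B) by ring,
        Real.sqrt_mul (by positivity), Real.sqrt_sq (by positivity)]

theorem card_mul_card_solutions (hψ : ψ.IsPrimitive) (A B C D : Finset F) :
    (Fintype.card F : ℂ) * #(solutions A B C D) =
      ∑ r, expSum ψ A r * expSum ψ B r * ∑ c ∈ C, expSum ψ D (-r * c) := by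
  have expand : ∀ r, expSum ψ A r * expSum ψ B r * ∑ c ∈ C, expSum ψ D (-r * c) =
      ∑ x ∈ A ×ˢ B ×ˢ C ×ˢ D, ψ (r * (x.1 + x.2.1 - x.2.2.1 * x.2.2.2)) := by
    intro r
    rw [expSum, expSum, sum_mul_sum]
    simp_rw [sum_mul]
    simp_rw [mul_sum, expSum, mul_sum, ← AddChar.map_add_eq_mul, sum_product]
    ring_nf
  simp_rw [expand]
  rw [sum_comm]
  simp_rw [AddChar.sum_mulShift _ hψ, sub_eq_zero, solutions, card_filter, Nat.cast_sum, mul_sum]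
  refine sum_congr rfl fun x _ ↦ ?_
  split_ifs <;> simp

theorem abs_card_mul_card_solutions_sub_le (hψ : ψ.IsPrimitive) (A B C D : Finset F) :
    |(Fintype.card F : ℝ) * #(solutions A B C D) - #A * #B * #C * #D| ≤
      Fintype.card F * √(Fintype.card F * (#A * #B * #C * #D)) := by
  set T : F → ℂ := fun r ↦ expSum ψ A r * expSum ψ B r * ∑ c ∈ C, expSum ψ D (-r * c)
  have hT0 : T 0 = #A * #B * #C * #D := by
    simp [T, mul_assoc]
  have hsplit : (((Fintype.card F : ℝ) * #(solutions A B C D) - #A * #B * #C * #D : ℝ) : ℂ) =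
      ∑ r ∈ univ.erase 0, T r := by
    have hcount : (Fintype.card F : ℂ) * #(solutions A B C D) = ∑ r, T r :=
      card_mul_card_solutions hψ A B C D
    push_cast
    linear_combination hcount - add_sum_erase univ T (mem_univ 0) + hT0
  have hterm : ∀ r ∈ univ.erase 0,
      ‖T r‖ ≤ ‖expSum ψ A r‖ * ‖expSum ψ B r‖ * √(Fintype.card F * #C * #D) := fun r hr ↦ by
    rw [norm_mul, norm_mul]
    gcongr
    exact norm_sum_expSum_mul_le hψ (neg_ne_zero.2 (ne_of_mem_erase hr)) C D
  rw [← Real.norm_eq_abs, ← Complex.norm_real, hsplit]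
  calc ‖∑ r ∈ univ.erase 0, T r‖
      ≤ ∑ r ∈ univ.erase 0, ‖expSum ψ A r‖ * ‖expSum ψ B r‖ * √(Fintype.card F * #C * #D) :=
        (norm_sum_le _ _).trans (sum_le_sum hterm)
    _ ≤ ∑ r, ‖expSum ψ A r‖ * ‖expSum ψ B r‖ * √(Fintype.card F * #C * #D) :=
        sum_le_univ_sum_of_nonneg fun _ ↦ by positivity
    _ ≤ Fintype.card F * √(#A * #B) * √(Fintype.card F * #C * #D) := by
        rw [← sum_mul]
        gcongr
        exact sum_norm_expSum_mul_norm_expSum_le hψ A B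
    _ = Fintype.card F * √(Fintype.card F * (#A * #B * #C * #D)) := by
        rw [mul_assoc, ← Real.sqrt_mul (by positivity)]
        congr 2
        ring

theorem card_mul_card_mul_card_mul_card_le_of_solutions_eq_empty (hψ : ψ.IsPrimitive)
    {A B C D : Finset F} (h : solutions A B C D = ∅) :
    (#A * #B * #C * #D : ℝ) ≤ Fintype.card F ^ 3 := by
  set q : ℝ := (Fintype.card F : ℝ)
  set P : ℝ := #A * #B * #C * #D
  have hP : P ≤ q * √(q * P) := by
    have hest := abs_card_mul_card_solutions_sub_le hψ A B C D
    rwa [h, card_empty, Nat.cast_zero, mul_zero, zero_sub, abs_neg,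
      abs_of_nonneg (by positivity)] at hest
  have hsq : P * P ≤ q ^ 3 * P :=
    calc P * P ≤ (q * √(q * P)) ^ 2 := by rw [← sq]; gcongr
      _ = q ^ 3 * P := by rw [mul_pow, Real.sq_sqrt (by positivity)]; ring
  rcases (show 0 ≤ P by positivity).eq_or_lt with hP0 | hP0
  · rw [← hP0]
    positivity
  · exact le_of_mul_le_mul_right hsq hP0

end Sarkozy

theorem stmt_17_general (p : ℕ) [Fact p.Prime] (A B C D : Finset (ZMod p))
    (h : p ^ 3 < A.card * B.card * C.card * D.card) :
    ∃ a ∈ A, ∃ b ∈ B, ∃ c ∈ C, ∃ d ∈ D, a + b = c * d := by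
  by_contra! hno
  have hempty : Sarkozy.solutions A B C D = ∅ := filter_eq_empty_iff.2 fun x hx ↦ by
    simp only [mem_product] at hx
    exact hno _ hx.1 _ hx.2.1 _ hx.2.2.1 _ hx.2.2.2
  have hle := Sarkozy.card_mul_card_mul_card_mul_card_le_of_solutions_eq_empty
    (ZMod.isPrimitive_stdAddChar p) hempty
  rw [ZMod.card] at hle
  exact h.not_ge (by exact_mod_cast hle)

theorem stmt_17 (p : ℕ) [Fact p.Prime] (A B C D : Finset (ZMod p))
    (hA : A.Nonempty) (hB : B.Nonempty) (hC : C.Nonempty) (hD : D.Nonempty)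
    (h : p ^ 3 < A.card * B.card * C.card * D.card) :
    ∃ a ∈ A, ∃ b ∈ B, ∃ c ∈ C, ∃ d ∈ D, a + b = c * d :=
  stmt_17_general p A B C D h
end
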